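/- Let (C,∂) be a finitely generated free chain complex over R = F₂[U,V,U⁻¹,V⁻¹], and let B and B' be two bases of C over R. Then Φ_B and Φ_{B'} are R-equivariantly chain homotopic, and similarly Ψ_B and Ψ_{B'} are R-equivariantly chain homotopic. That is, the chain homotopy classes of the formal derivatives of the differential do not depend on the choice of basis. -/

import Mathlib

open Finsupp

noncomputable section

abbrev F2 : Type := ZMod 2

/-- The Laurent polynomial ring `F₂[U,V,U⁻¹,V⁻¹]`, realized as the monoid algebra
of `ℤ × ℤ` over `F₂`; `U` corresponds to `(1,0)` and `V` to `(0,1)`. -/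
abbrev R2 : Type := AddMonoidAlgebra F2 (ℤ × ℤ)

/-- Formal derivative of a Laurent polynomial with respect to `U`. -/
def dU (f : R2) : R2 :=
  AddMonoidAlgebra.ofCoeff (Finsupp.sum f.coeff fun mn c => Finsupp.single (mn.1 - 1, mn.2) ((mn.1 : F2) * c))

/-- Formal derivative of a Laurent polynomial with respect to `V`. -/
def dV (f : R2) : R2 :=
  AddMonoidAlgebra.ofCoeff (Finsupp.sum f.coeff fun mn c => Finsupp.single (mn.1, mn.2 - 1) ((mn.2 : F2) * c))

/-- The `R2`-linear map `(B →₀ R2) →ₗ (B' →₀ R2)` determined by its values on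
the standard basis. -/
def bmap {B B' : Type} (v : B → (B' →₀ R2)) : (B →₀ R2) →ₗ[R2] (B' →₀ R2) :=
  Finsupp.lsum R2 fun x => LinearMap.toSpanSingleton R2 _ (v x)

/-- The matrix entry `P_{x y}` of a linear map with respect to the standard bases. -/
def matOf {B B' : Type} (f : (B →₀ R2) →ₗ[R2] (B' →₀ R2)) (x : B) (y : B') : R2 :=
  f (Finsupp.single x 1) y

/-- Apply `g : R2 → R2` to each matrix entry of `f`. -/
def entrywise {B B' : Type} [Finite B'] (g : R2 → R2)
    (f : (B →₀ R2) →ₗ[R2] (B' →₀ R2)) : (B →₀ R2) →ₗ[R2] (B' →₀ R2) :=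
  bmap fun x => Finsupp.equivFunOnFinite.symm fun y => g (matOf f x y)

/-- `Φ_B`, the formal derivative of the differential with respect to `U`. -/
def PhiB {B : Type} [Finite B] (d : (B →₀ R2) →ₗ[R2] (B →₀ R2)) :
    (B →₀ R2) →ₗ[R2] (B →₀ R2) :=
  entrywise dU d

/-- `Ψ_B`, the formal derivative of the differential with respect to `V`. -/
def PsiB {B : Type} [Finite B] (d : (B →₀ R2) →ₗ[R2] (B →₀ R2)) :
    (B →₀ R2) →ₗ[R2] (B →₀ R2) :=
  entrywise dV d
/-- `Φ_b` for an abstract finitely generated free `R2`-module with basis `b`: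
the formal `U`-derivative of the differential computed in the basis `b`. -/
def phiOf {C : Type} [AddCommGroup C] [Module R2 C] {ι : Type} [Fintype ι]
    (b : Module.Basis ι R2 C) (d : C →ₗ[R2] C) : C →ₗ[R2] C :=
  b.repr.symm.toLinearMap ∘ₗ
    PhiB (b.repr.toLinearMap ∘ₗ d ∘ₗ b.repr.symm.toLinearMap) ∘ₗ b.repr.toLinearMap

/-- `Ψ_b` for an abstract finitely generated free `R2`-module with basis `b`. -/
def psiOf {C : Type} [AddCommGroup C] [Module R2 C] {ι : Type} [Fintype ι]
    (b : Module.Basis ι R2 C) (d : C →ₗ[R2] C) : C →ₗ[R2] C :=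
  b.repr.symm.toLinearMap ∘ₗ
    PsiB (b.repr.toLinearMap ∘ₗ d ∘ₗ b.repr.symm.toLinearMap) ∘ₗ b.repr.toLinearMap


/-! Formal partial derivatives are derivations of `R`, so taking them entrywise obeys the
Leibniz rule `D(PQ) = D(P) Q + P D(Q)` for products of matrices. Writing `∂` as `id ∘ ∂ ∘ id`,
with the identities expressed between the bases `B` and `B'`, then gives
`Φ_{B'} = Φ_B + E∂ - ∂E`, where `E` is the entrywise derivative of the change-of-basis matrix;
in characteristic two this says `Φ_B + Φ_{B'} = ∂E + E∂`. -/

def weightedShift (χ : ℤ × ℤ →+ ℤ) (e : ℤ × ℤ) (f : R2) : R2 :=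
  AddMonoidAlgebra.ofCoeff (f.coeff.sum fun m c => Finsupp.single (m - e) ((χ m : F2) * c))

section WeightedShift

variable (χ : ℤ × ℤ →+ ℤ) (e : ℤ × ℤ)

lemma weightedShift_add (f g : R2) :
    weightedShift χ e (f + g) = weightedShift χ e f + weightedShift χ e g :=
  congrArg AddMonoidAlgebra.ofCoeff <|
    Finsupp.sum_add_index' (by simp) (by intros; simp [mul_add, Finsupp.single_add])

lemma weightedShift_single (m : ℤ × ℤ) (c : F2) :
    weightedShift χ e (AddMonoidAlgebra.single m c) =
      AddMonoidAlgebra.single (m - e) ((χ m : F2) * c) :=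
  congrArg AddMonoidAlgebra.ofCoeff (Finsupp.sum_single_index (by simp))

lemma weightedShift_mul (f g : R2) :
    weightedShift χ e (f * g) = f * weightedShift χ e g + g * weightedShift χ e f := by
  induction f using AddMonoidAlgebra.induction_linear with
  | zero => simp [weightedShift]
  | add f₁ f₂ h₁ h₂ => simp only [add_mul, weightedShift_add, h₁, h₂]; ring
  | single a c =>
    induction g using AddMonoidAlgebra.induction_linear with
    | zero => simp [weightedShift]
    | add g₁ g₂ h₁ h₂ => simp only [mul_add, weightedShift_add, h₁, h₂]; ring
    | single b c' =>
      simp only [AddMonoidAlgebra.single_mul_single, weightedShift_single, map_add,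
        Int.cast_add, add_sub_assoc]
      rw [show b + (a - e) = a + (b - e) by abel, ← AddMonoidAlgebra.single_add]
      congr 1
      ring

def weightedShiftDerivation : Derivation ℤ R2 R2 :=
  Derivation.mk' (AddMonoidHom.mk' (weightedShift χ e) (weightedShift_add χ e)).toIntLinearMap
    (weightedShift_mul χ e)

lemma coe_weightedShiftDerivation : ⇑(weightedShiftDerivation χ e) = weightedShift χ e := rfl

end WeightedShift

def derivU : Derivation ℤ R2 R2 := weightedShiftDerivation (AddMonoidHom.fst ℤ ℤ) (1, 0)

def derivV : Derivation ℤ R2 R2 := weightedShiftDerivation (AddMonoidHom.snd ℤ ℤ) (0, 1)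

lemma coe_derivU : ⇑derivU = dU := by
  funext f
  simp only [derivU, coe_weightedShiftDerivation, weightedShift, dU, Prod.sub_def, sub_zero,
    AddMonoidHom.coe_fst]

lemma coe_derivV : ⇑derivV = dV := by
  funext f
  simp only [derivV, coe_weightedShiftDerivation, weightedShift, dV, Prod.sub_def, sub_zero,
    AddMonoidHom.coe_snd]

lemma add_self_eq_zero_of_two_eq_zero {A M : Type*} [Semiring A] [AddCommMonoid M] [Module A M]
    (h2 : (2 : A) = 0) (x : M) : x + x = 0 := by
  rw [← two_smul A x, h2, zero_smul]

lemma two_eq_zero_R2 : (2 : R2) = 0 := by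
  rw [← map_ofNat (algebraMap F2 R2) 2, show (2 : F2) = 0 from rfl, map_zero]

section Entrywise

variable {B B' B'' : Type}

lemma bmap_single (v : B → (B' →₀ R2)) (x : B) (c : R2) :
    bmap v (Finsupp.single x c) = c • v x := by
  simp [bmap]

lemma matOf_ext {f g : (B →₀ R2) →ₗ[R2] (B' →₀ R2)} (h : ∀ x y, matOf f x y = matOf g x y) :
    f = g :=
  Finsupp.lhom_ext' fun x => LinearMap.ext_ring <| Finsupp.ext (h x)

lemma matOf_add (f g : (B →₀ R2) →ₗ[R2] (B' →₀ R2)) (x : B) (y : B') :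
    matOf (f + g) x y = matOf f x y + matOf g x y :=
  rfl

lemma matOf_entrywise [Finite B'] (g : R2 → R2) (f : (B →₀ R2) →ₗ[R2] (B' →₀ R2))
    (x : B) (y : B') : matOf (entrywise g f) x y = g (matOf f x y) := by
  simp [entrywise, matOf, bmap_single]

lemma matOf_id [DecidableEq B] (x y : B) :
    matOf (LinearMap.id : (B →₀ R2) →ₗ[R2] (B →₀ R2)) x y = if x = y then 1 else 0 :=
  Finsupp.single_apply

lemma matOf_comp [Fintype B'] (f : (B →₀ R2) →ₗ[R2] (B' →₀ R2))
    (g : (B' →₀ R2) →ₗ[R2] (B'' →₀ R2)) (x : B) (z : B'') :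
    matOf (g ∘ₗ f) x z = ∑ y, matOf f x y * matOf g y z := by
  have hf : f (Finsupp.single x 1) = ∑ y, matOf f x y • Finsupp.single y 1 := by
    conv_lhs => rw [← Finsupp.sum_single (f (Finsupp.single x 1))]
    rw [Finsupp.sum_fintype _ _ (by simp)]
    simp [matOf]
  change g (f (Finsupp.single x 1)) z = _
  simp only [hf, map_sum, map_smul, Finsupp.finsetSum_apply, Finsupp.smul_apply, smul_eq_mul]
  rfl

variable (D : Derivation ℤ R2 R2)

lemma entrywise_comp [Fintype B'] [Finite B''] (f : (B →₀ R2) →ₗ[R2] (B' →₀ R2))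
    (g : (B' →₀ R2) →ₗ[R2] (B'' →₀ R2)) :
    entrywise D (g ∘ₗ f) = entrywise D g ∘ₗ f + g ∘ₗ entrywise D f := by
  refine matOf_ext fun x z => ?_
  rw [matOf_add, matOf_entrywise, matOf_comp, matOf_comp, matOf_comp, map_sum,
    ← Finset.sum_add_distrib]
  refine Finset.sum_congr rfl fun y _ => ?_
  rw [matOf_entrywise, matOf_entrywise, D.leibniz, smul_eq_mul, smul_eq_mul]
  ring

lemma entrywise_id [Finite B] : entrywise D (LinearMap.id : (B →₀ R2) →ₗ[R2] (B →₀ R2)) = 0 := by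
  classical
  refine matOf_ext fun x y => ?_
  rw [matOf_entrywise, matOf_id]
  split_ifs <;> simp [matOf]

end Entrywise

section BasisDeriv

variable (D : Derivation ℤ R2 R2) {C : Type} [AddCommGroup C] [Module R2 C]
  {ι ι' ι'' : Type}

def basisDeriv [Finite ι'] (b : Module.Basis ι R2 C) (b' : Module.Basis ι' R2 C)
    (f : C →ₗ[R2] C) : C →ₗ[R2] C :=
  b'.repr.symm.toLinearMap ∘ₗ
    entrywise D (b'.repr.toLinearMap ∘ₗ f ∘ₗ b.repr.symm.toLinearMap) ∘ₗ b.repr.toLinearMap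

lemma basisDeriv_comp [Fintype ι'] [Finite ι''] (b : Module.Basis ι R2 C)
    (b' : Module.Basis ι' R2 C) (b'' : Module.Basis ι'' R2 C) (f g : C →ₗ[R2] C) :
    basisDeriv D b b'' (g ∘ₗ f) = basisDeriv D b' b'' g ∘ₗ f + g ∘ₗ basisDeriv D b b' f := by
  have hsplit : b''.repr.toLinearMap ∘ₗ (g ∘ₗ f) ∘ₗ b.repr.symm.toLinearMap =
      (b''.repr.toLinearMap ∘ₗ g ∘ₗ b'.repr.symm.toLinearMap) ∘ₗ
        (b'.repr.toLinearMap ∘ₗ f ∘ₗ b.repr.symm.toLinearMap) := by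
    ext; simp
  unfold basisDeriv
  rw [hsplit, entrywise_comp]
  ext; simp

lemma basisDeriv_id [Finite ι] (b : Module.Basis ι R2 C) : basisDeriv D b b LinearMap.id = 0 := by
  have hid : b.repr.toLinearMap ∘ₗ LinearMap.id ∘ₗ b.repr.symm.toLinearMap = LinearMap.id := by
    ext; simp
  unfold basisDeriv
  rw [hid, entrywise_id]
  simp

lemma basisDeriv_self_eq [Fintype ι] [Fintype ι'] (b : Module.Basis ι R2 C)
    (b' : Module.Basis ι' R2 C) (d : C →ₗ[R2] C) :
    basisDeriv D b' b' d = basisDeriv D b b d + basisDeriv D b b' LinearMap.id ∘ₗ d -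
      d ∘ₗ basisDeriv D b b' LinearMap.id := by
  set E := basisDeriv D b b' LinearMap.id
  have hinv : basisDeriv D b' b LinearMap.id = -E := by
    have h := basisDeriv_comp D b b' b LinearMap.id LinearMap.id
    rw [LinearMap.id_comp, basisDeriv_id, LinearMap.comp_id, LinearMap.id_comp] at h
    exact eq_neg_of_add_eq_zero_left h.symm
  calc basisDeriv D b' b' d = basisDeriv D b' b' (LinearMap.id ∘ₗ d ∘ₗ LinearMap.id) := rfl
    _ = E ∘ₗ d + basisDeriv D b b d + d ∘ₗ basisDeriv D b' b LinearMap.id := by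
      rw [basisDeriv_comp D b' b b', basisDeriv_comp D b' b b, LinearMap.comp_id,
        LinearMap.id_comp, LinearMap.comp_id, add_assoc]
    _ = _ := by rw [hinv, LinearMap.comp_neg]; abel

lemma basisDeriv_add_basisDeriv [Fintype ι] [Fintype ι'] (b : Module.Basis ι R2 C)
    (b' : Module.Basis ι' R2 C) (d : C →ₗ[R2] C) :
    basisDeriv D b b d + basisDeriv D b' b' d =
      d ∘ₗ basisDeriv D b b' LinearMap.id + basisDeriv D b b' LinearMap.id ∘ₗ d := by
  have h2 := add_self_eq_zero_of_two_eq_zero (M := C →ₗ[R2] C) two_eq_zero_R2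
  set E := basisDeriv D b b' LinearMap.id
  set Φ := basisDeriv D b b d
  calc Φ + basisDeriv D b' b' d = (Φ + Φ) + (d ∘ₗ E + E ∘ₗ d) - (d ∘ₗ E + d ∘ₗ E) := by
        rw [basisDeriv_self_eq D b b' d]; abel
    _ = d ∘ₗ E + E ∘ₗ d := by rw [h2, h2, zero_add, sub_zero]

end BasisDeriv

lemma phiOf_eq_basisDeriv {C : Type} [AddCommGroup C] [Module R2 C] {ι : Type} [Fintype ι]
    (b : Module.Basis ι R2 C) (d : C →ₗ[R2] C) : phiOf b d = basisDeriv derivU b b d := by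
  rw [basisDeriv, coe_derivU]
  rfl

lemma psiOf_eq_basisDeriv {C : Type} [AddCommGroup C] [Module R2 C] {ι : Type} [Fintype ι]
    (b : Module.Basis ι R2 C) (d : C →ₗ[R2] C) : psiOf b d = basisDeriv derivV b b d := by
  rw [basisDeriv, coe_derivV]
  rfl

theorem stmt5_general {C : Type} [AddCommGroup C] [Module R2 C] {ι ι' : Type}
    [Fintype ι] [Fintype ι'] (b : Module.Basis ι R2 C) (b' : Module.Basis ι' R2 C)
    (d : C →ₗ[R2] C) :
    (∃ H : C →ₗ[R2] C, phiOf b d + phiOf b' d = d ∘ₗ H + H ∘ₗ d) ∧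
    (∃ H : C →ₗ[R2] C, psiOf b d + psiOf b' d = d ∘ₗ H + H ∘ₗ d) := by
  rw [phiOf_eq_basisDeriv, phiOf_eq_basisDeriv, psiOf_eq_basisDeriv, psiOf_eq_basisDeriv]
  exact ⟨⟨_, basisDeriv_add_basisDeriv derivU b b' d⟩, ⟨_, basisDeriv_add_basisDeriv derivV b b' d⟩⟩

/-- for two bases `B`, `B'` of the same finitely generated free
chain complex `(C,∂)` over `R = F₂[U,V,U⁻¹,V⁻¹]`, the maps `Φ_B` and `Φ_{B'}`
are `R`-equivariantly chain homotopic, and likewise `Ψ_B` and `Ψ_{B'}`. -/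
theorem stmt5 {C : Type} [AddCommGroup C] [Module R2 C] {ι ι' : Type}
    [Fintype ι] [Fintype ι'] (b : Module.Basis ι R2 C) (b' : Module.Basis ι' R2 C)
    (d : C →ₗ[R2] C) (hd : d ∘ₗ d = 0) :
    (∃ H : C →ₗ[R2] C, phiOf b d + phiOf b' d = d ∘ₗ H + H ∘ₗ d) ∧
    (∃ H : C →ₗ[R2] C, psiOf b d + psiOf b' d = d ∘ₗ H + H ∘ₗ d) :=
  stmt5_general b b' d

end
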